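/- Let B ∈ M_{n×m}(ℝ) be a non-zero matrix whose columns are linearly independent, and let W ∈ M_{m×m}(ℝ) be a diagonal matrix with strictly positive diagonal entries w₁,…,w_m. Let λ_min denote the smallest non-zero eigenvalue of the symmetric positive-semidefinite matrix B·W·Bᵀ. Then min_{1≤j≤m} w_j · ( (Bᵀ·B)_{jj} − Σ_{i≠j} |(Bᵀ·B)_{ij}| ) ≤ λ_min ≤ min_{1≤j≤m} w_j · (Bᵀ·B)_{jj}. (With B the matrix representation of the restricted boundary operator of an unweighted q-non-branching pair K ↪ L and W = Id⊕S⁻¹, this is the Cheeger-type inequality min_j Â(P_j)/V(P_j) ≤ λ_min^{K,L} ≤ min_j A(P_j)/V(P_j).) -/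

import Mathlib

/-!
For the lower bound, `λ_min` is also a non-zero eigenvalue of `W Bᵀ B` (the non-zero spectra of
`X Y` and `Y X` agree), so Gershgorin's circle theorem applied to the rows of `W (BᵀB)` gives it.
For the upper bound, put `C = B W^{1/2}`: then `C Cᵀ = B W Bᵀ`, while `Cᵀ C = W^{1/2} BᵀB W^{1/2}`
is positive definite because `C` is injective. Every eigenvalue of `Cᵀ C` is thus a non-zero
eigenvalue of `B W Bᵀ`, hence at least `λ_min`; so `Cᵀ C - λ_min` is positive semidefinite and its
diagonal entries `w_j (BᵀB)_{jj} - λ_min` are non-negative.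
-/

open Matrix Module.End
open scoped ComplexOrder

theorem Matrix.hasEigenvalue_toLin'_iff {R n : Type*} [CommRing R] [Fintype n] [DecidableEq n]
    (M : Matrix n n R) (μ : R) :
    HasEigenvalue (toLin' M) μ ↔ ∃ v : n → R, v ≠ 0 ∧ M *ᵥ v = μ • v := by
  simp only [hasEigenvalue_iff, Submodule.ne_bot_iff, mem_eigenspace_iff, toLin'_apply]
  exact ⟨fun ⟨v, hv, hv0⟩ => ⟨v, hv0, hv⟩, fun ⟨v, hv0, hv⟩ => ⟨v, hv, hv0⟩⟩

theorem Matrix.hasEigenvalue_toLin'_mul_comm {R l m : Type*} [CommRing R] [NoZeroDivisors R]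
    [Fintype l] [Fintype m] [DecidableEq l] [DecidableEq m]
    {A : Matrix l m R} {B : Matrix m l R} {μ : R} (hμ : μ ≠ 0)
    (h : HasEigenvalue (toLin' (A * B)) μ) : HasEigenvalue (toLin' (B * A)) μ := by
  obtain ⟨v, hv0, hv⟩ := (hasEigenvalue_toLin'_iff _ _).mp h
  refine (hasEigenvalue_toLin'_iff _ _).mpr ⟨B *ᵥ v, fun hBv => ?_, ?_⟩
  · have : μ • v = 0 := by rw [← hv, ← mulVec_mulVec, hBv, mulVec_zero]
    exact (smul_eq_zero.mp this).elim hμ hv0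
  · rw [mulVec_mulVec, Matrix.mul_assoc, ← mulVec_mulVec, hv, mulVec_smul]

theorem Matrix.IsHermitian.le_diag_of_le_eigenvalues {𝕜 n : Type*} [RCLike 𝕜] [Fintype n]
    [DecidableEq n] {A : Matrix n n 𝕜} (hA : A.IsHermitian) {c : ℝ}
    (hc : ∀ k, c ≤ hA.eigenvalues k) (j : n) : (c : 𝕜) ≤ A j j := by
  have hpsd : (A - algebraMap 𝕜 _ c).PosSemidef := by
    refine posSemidef_iff_isHermitian_and_spectrum_nonneg.mpr ⟨?_, ?_⟩
    · exact hA.sub (IsSelfAdjoint.algebraMap _ (RCLike.conj_ofReal c))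
    · rw [← spectrum.sub_singleton_eq, hA.spectrum_eq_image_range]
      rintro _ ⟨_, ⟨_, ⟨k, rfl⟩, rfl⟩, _, rfl, rfl⟩
      simpa [sub_nonneg, RCLike.ofReal_le_ofReal] using hc k
  simpa [sub_nonneg, algebraMap_eq_diagonal] using hpsd.diag_nonneg (i := j)

theorem Matrix.IsSymm.exists_le_of_hasEigenvalue_diagonal_mul {m : Type*} [Fintype m]
    [DecidableEq m] {G : Matrix m m ℝ} (hG : G.IsSymm) {w : m → ℝ} (hw : ∀ j, 0 ≤ w j) {μ : ℝ}
    (hμ : HasEigenvalue (toLin' (diagonal w * G)) μ) :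
    ∃ j, w j * (G j j - ∑ i ∈ Finset.univ.filter (fun i => i ≠ j), |G i j|) ≤ μ := by
  obtain ⟨j, hj⟩ := eigenvalue_mem_ball hμ
  refine ⟨j, ?_⟩
  have hrow : ∑ i ∈ Finset.univ.filter (fun i => i ≠ j), |G i j|
      = ∑ i ∈ Finset.univ.erase j, |G j i| := by
    rw [Finset.filter_ne']
    exact Finset.sum_congr rfl fun i _ => by rw [hG.apply]
  rw [Metric.mem_closedBall, Real.dist_eq] at hj
  simp only [diagonal_mul, Real.norm_eq_abs, abs_mul, abs_of_nonneg (hw j), ← Finset.mul_sum] at hj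
  rw [hrow, mul_sub]
  linarith [neg_abs_le (μ - w j * G j j)]

theorem Matrix.le_mul_diag_transpose_mul_self {n m : Type*} [Fintype n] [Fintype m]
    [DecidableEq n] [DecidableEq m] {B : Matrix n m ℝ} (hB : Function.Injective B.mulVec)
    {w : m → ℝ} (hw : ∀ j, 0 < w j) {c : ℝ}
    (hc : ∀ μ, μ ≠ 0 → HasEigenvalue (toLin' (B * diagonal w * Bᵀ)) μ → c ≤ μ) (j : m) :
    c ≤ w j * (Bᵀ * B) j j := by
  set C := B * diagonal (fun i => √(w i))
  have hC : Function.Injective C.mulVec := by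
    have hD : IsUnit (diagonal fun i => √(w i)) :=
      isUnit_diagonal.mpr (Pi.isUnit_iff.mpr fun i => (Real.sqrt_pos.mpr (hw i)).ne'.isUnit)
    intro x y hxy
    simp only [C, ← mulVec_mulVec] at hxy
    exact mulVec_injective_iff_isUnit.mpr hD (hB hxy)
  have hS := PosDef.conjTranspose_mul_self C hC
  have hsqrt : ∀ i, √(w i) * √(w i) = w i := fun i => Real.mul_self_sqrt (hw i).le
  have hCC : C * Cᴴ = B * diagonal w * Bᵀ := by
    simp only [C, conjTranspose_eq_transpose_of_trivial, transpose_mul, diagonal_transpose,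
      Matrix.mul_assoc]
    rw [← Matrix.mul_assoc (diagonal _), diagonal_mul_diagonal]
    simp only [hsqrt]
  have hcS : ∀ k, c ≤ hS.1.eigenvalues k := fun k => by
    refine hc _ (hS.eigenvalues_pos k).ne' ?_
    rw [← hCC]
    refine hasEigenvalue_toLin'_mul_comm (hS.eigenvalues_pos k).ne' ?_
    rw [hasEigenvalue_iff_mem_spectrum, spectrum_toLin']
    exact hS.1.eigenvalues_mem_spectrum_real k
  have hSjj : (Cᴴ * C) j j = w j * (Bᵀ * B) j j := by
    have : Cᴴ * C = diagonal (fun i => √(w i)) * (Bᵀ * B) * diagonal (fun i => √(w i)) := by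
      simp only [C, conjTranspose_eq_transpose_of_trivial, transpose_mul, diagonal_transpose,
        Matrix.mul_assoc]
    rw [this, mul_diagonal, diagonal_mul, mul_right_comm, hsqrt]
  simpa only [RCLike.ofReal_real_eq_id, id, hSjj] using hS.1.le_diag_of_le_eigenvalues hcS j

theorem stmt13 {n m : ℕ} (B : Matrix (Fin n) (Fin m) ℝ)
    (hind : LinearIndependent ℝ (fun j : Fin m => fun i : Fin n => B i j))
    (w : Fin m → ℝ) (hw : ∀ j, 0 < w j)
    (W : Matrix (Fin m) (Fin m) ℝ) (hW : W = Matrix.diagonal w)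
    (lamMin : ℝ) (hne : lamMin ≠ 0)
    (heig : ∃ v : Fin n → ℝ, v ≠ 0 ∧ (B * W * B.transpose).mulVec v = lamMin • v)
    (hmin : ∀ μ : ℝ, μ ≠ 0 →
      (∃ v : Fin n → ℝ, v ≠ 0 ∧ (B * W * B.transpose).mulVec v = μ • v) → lamMin ≤ μ) :
    (∃ j : Fin m,
      w j * ((B.transpose * B) j j -
        ∑ i ∈ Finset.univ.filter (fun i => i ≠ j), |(B.transpose * B) i j|) ≤ lamMin) ∧
    (∀ j : Fin m, lamMin ≤ w j * (B.transpose * B) j j) := by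
  subst hW
  have hinj : Function.Injective B.mulVec := mulVec_injective_iff.mpr hind
  refine ⟨?_, le_mul_diag_transpose_mul_self hinj hw fun μ hμ h =>
    hmin μ hμ ((hasEigenvalue_toLin'_iff _ _).mp h)⟩
  have hBWBt := (hasEigenvalue_toLin'_iff _ _).mpr heig
  rw [Matrix.mul_assoc] at hBWBt
  have hWBtB := hasEigenvalue_toLin'_mul_comm hne hBWBt
  rw [Matrix.mul_assoc] at hWBtB
  have hG : (Bᵀ * B).IsSymm := by simp [IsSymm, transpose_mul]
  exact hG.exists_le_of_hasEigenvalue_diagonal_mul (fun j => (hw j).le) hWBtB
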